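/- Let I ⊆ k[x_1,…,x_n] be an ideal, ≺ a term order, and v ∈ ℝ^n. Then in_v(I) = in_≺(I) if and only if in_v(g) = in_≺(g) for every g in the reduced Gröbner basis G_≺(I). -/

import Mathlib

/-!
The leading monomials of the reduced Gröbner basis `G` span the monomial ideal `in_≺(I)`.

If `in_v(I) = in_≺(I)`, then for `g ∈ G` the form `in_v(g)` lies in this monomial ideal, so each of
its monomials does; by reducedness the only monomial of `g` in `in_≺(I)` is the leading one, hence
`in_v(g) = in_≺(g)`.

Conversely, suppose `in_v(g) = in_≺(g)` for all `g ∈ G`. Then `in_≺(I)`, spanned by these forms,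
lies in `in_v(I)`. For the other inclusion, divide `f ∈ I` by `G`: cancelling the leading term of
`f` by `c x^γ g` changes the top-weight `v`-component of `f` only by `c x^γ in_≺(g)` or by nothing,
because `in_≺(g)` is the unique `v`-heaviest term of `g`. Term orders are well-founded (Dickson's
lemma), so induction on the leading exponent puts `in_v(f)` in `in_≺(I)`.
-/

open MvPolynomial

/-- A term order on the monomials of `k[x_1,…,x_n]`, identified with exponent
vectors in `ℕ^n`: a strict total order with `1` smallest and compatible with
multiplication of monomials. -/
structure TermOrder (n : ℕ) : Type where
  lt : (Fin n →₀ ℕ) → (Fin n →₀ ℕ) → Prop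
  irrefl : ∀ a, ¬ lt a a
  trans : ∀ a b c, lt a b → lt b c → lt a c
  total : ∀ a b, a ≠ b → lt a b ∨ lt b a
  zero_lt : ∀ a, a ≠ 0 → lt 0 a
  add_right : ∀ a b c, lt a b → lt (a + c) (b + c)

variable {n : ℕ} {k : Type*} [Field k]

/-- The exponent of the `τ`-largest term of `f` (and `0` if `f = 0`). -/
noncomputable def TermOrder.leadExp (τ : TermOrder n) (f : MvPolynomial (Fin n) k) :
    Fin n →₀ ℕ :=
  letI := Classical.propDecidable (∃ α, α ∈ f.support ∧ ∀ β ∈ f.support, β ≠ α → τ.lt β α)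
  if h : ∃ α, α ∈ f.support ∧ ∀ β ∈ f.support, β ≠ α → τ.lt β α then h.choose else 0

/-- The initial term `in_τ(f)` : the `τ`-largest term of `f` (with coefficient). -/
noncomputable def TermOrder.initialTerm (τ : TermOrder n) (f : MvPolynomial (Fin n) k) :
    MvPolynomial (Fin n) k :=
  monomial (τ.leadExp f) (f.coeff (τ.leadExp f))

/-- The initial ideal `in_τ(I) = ⟨in_τ(f) : f ∈ I \ {0}⟩`. -/
noncomputable def TermOrder.initialIdeal (τ : TermOrder n) (I : Ideal (MvPolynomial (Fin n) k)) :
    Ideal (MvPolynomial (Fin n) k) :=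
  Ideal.span {p | ∃ f ∈ I, f ≠ 0 ∧ p = τ.initialTerm f}

/-- The `ω`-degree `⟨ω,α⟩` of a monomial exponent `α`. -/
noncomputable def wdeg (ω : Fin n → ℝ) (α : Fin n →₀ ℕ) : ℝ := ∑ i, ω i * (α i : ℝ)

/-- The initial form `in_ω(f)`: the sum of the terms of `f` whose exponents
maximize `⟨ω,·⟩`. -/
noncomputable def initialForm (ω : Fin n → ℝ) (f : MvPolynomial (Fin n) k) :
    MvPolynomial (Fin n) k :=
  letI : DecidablePred fun α : Fin n →₀ ℕ => ∀ β ∈ f.support, wdeg ω β ≤ wdeg ω α :=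
    Classical.decPred _
  ∑ α ∈ f.support.filter (fun α => ∀ β ∈ f.support, wdeg ω β ≤ wdeg ω α),
    monomial α (f.coeff α)

/-- The initial ideal `in_ω(I) = ⟨in_ω(f) : f ∈ I⟩`. -/
noncomputable def initialFormIdeal (ω : Fin n → ℝ) (I : Ideal (MvPolynomial (Fin n) k)) :
    Ideal (MvPolynomial (Fin n) k) :=
  Ideal.span {p | ∃ f ∈ I, p = initialForm ω f}

/-- `C_≺(I)`: the closure of `{u : in_u(I) = in_≺(I)}` in `ℝ^n`. -/
noncomputable def Cprec (τ : TermOrder n) (I : Ideal (MvPolynomial (Fin n) k)) :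
    Set (Fin n → ℝ) :=
  closure {u : Fin n → ℝ | initialFormIdeal u I = τ.initialIdeal I}

/-- `C_v(I)`: the closure of the equivalence class `{u : in_u(I) = in_v(I)}`. -/
noncomputable def Cv (I : Ideal (MvPolynomial (Fin n) k)) (v : Fin n → ℝ) :
    Set (Fin n → ℝ) :=
  closure {u : Fin n → ℝ | initialFormIdeal u I = initialFormIdeal v I}

/-- `F` is a face of `C`: either empty or the set of maximizers over `C` of a
linear functional. -/
def IsFaceOf (C F : Set (Fin n → ℝ)) : Prop :=
  F = ∅ ∨ ∃ w : Fin n → ℝ, F = {x ∈ C | ∀ y ∈ C, ∑ i, w i * y i ≤ ∑ i, w i * x i}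

/-- The Gröbner fan of `I`: all nonempty faces of the cones `C_v(I)`, `v ∈ ℝ^n_{>0}`. -/
noncomputable def GroebnerFan (I : Ideal (MvPolynomial (Fin n) k)) :
    Set (Set (Fin n → ℝ)) :=
  {F | F.Nonempty ∧ ∃ v : Fin n → ℝ, (∀ i, 0 < v i) ∧ IsFaceOf (Cv I v) F}

/-- `G` is a (finite) Gröbner basis of `I` w.r.t. `τ`. -/
def IsGroebnerBasis (τ : TermOrder n) (I : Ideal (MvPolynomial (Fin n) k))
    (G : Set (MvPolynomial (Fin n) k)) : Prop :=
  G.Finite ∧ Ideal.span G = I ∧ τ.initialIdeal I = Ideal.span (τ.initialTerm '' G)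

/-- `G` is the reduced Gröbner basis of `I` w.r.t. `τ`. -/
def IsReducedGroebnerBasis (τ : TermOrder n) (I : Ideal (MvPolynomial (Fin n) k))
    (G : Set (MvPolynomial (Fin n) k)) : Prop :=
  IsGroebnerBasis τ I G ∧
  (∀ g ∈ G, g.coeff (τ.leadExp g) = 1) ∧
  (∀ g ∈ G, ∀ α ∈ g.support, α ≠ τ.leadExp g →
    (monomial α 1 : MvPolynomial (Fin n) k) ∉ τ.initialIdeal I) ∧
  (∀ g ∈ G, Ideal.span (τ.initialTerm '' (G \ {g})) ≠ τ.initialIdeal I)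

namespace TermOrder

variable (τ : TermOrder n)

instance : IsStrictOrder (Fin n →₀ ℕ) τ.lt where
  irrefl := τ.irrefl
  trans := τ.trans

variable {τ}

lemma lt_add_left {a b : Fin n →₀ ℕ} (h : τ.lt a b) (c : Fin n →₀ ℕ) : τ.lt (c + a) (c + b) := by
  simpa only [add_comm c] using τ.add_right a b c h

lemma lt_of_le_of_ne {a b : Fin n →₀ ℕ} (hle : a ≤ b) (hne : a ≠ b) : τ.lt a b := by
  obtain ⟨c, rfl⟩ := le_iff_exists_add.mp hle
  simpa using τ.lt_add_left (τ.zero_lt c (by rintro rfl; simp at hne)) a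

variable (τ)

lemma wellFounded : WellFounded τ.lt := by
  rw [RelEmbedding.wellFounded_iff_isEmpty]
  refine ⟨fun f => ?_⟩
  obtain ⟨i, j, hij, hle⟩ := wellQuasiOrdered_le f
  have hlt : τ.lt (f j) (f i) := f.map_rel_iff.2 hij
  by_cases heq : f i = f j
  · exact τ.irrefl _ (heq ▸ hlt)
  · exact τ.irrefl _ (τ.trans _ _ _ hlt (lt_of_le_of_ne hle heq))

lemma exists_max (s : Finset (Fin n →₀ ℕ)) (hs : s.Nonempty) :
    ∃ α ∈ s, ∀ β ∈ s, β ≠ α → τ.lt β α := by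
  obtain ⟨α, hα, hmax⟩ := (Set.wellFoundedOn_iff.1
    (s.finite_toSet.wellFoundedOn (r := Function.swap τ.lt))).has_min s hs
  exact ⟨α, hα, fun β hβ hne => (τ.total β α hne).resolve_right fun h => hmax β hβ ⟨h, hβ, hα⟩⟩

variable {τ}

lemma leadExp_spec {f : MvPolynomial (Fin n) k} (hf : f ≠ 0) :
    τ.leadExp f ∈ f.support ∧ ∀ β ∈ f.support, β ≠ τ.leadExp f → τ.lt β (τ.leadExp f) := by
  have h := τ.exists_max f.support (support_nonempty.2 hf)
  rw [leadExp, dif_pos h]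
  exact h.choose_spec

lemma ne_zero_of_coeff_leadExp_eq_one {g : MvPolynomial (Fin n) k}
    (hg : g.coeff (τ.leadExp g) = 1) : g ≠ 0 := by
  rintro rfl
  exact zero_ne_one (by rwa [coeff_zero] at hg)

lemma initialTerm_eq_monomial_one {g : MvPolynomial (Fin n) k}
    (hg : g.coeff (τ.leadExp g) = 1) : τ.initialTerm g = monomial (τ.leadExp g) 1 := by
  rw [initialTerm, hg]

lemma span_initialTerm_image_eq {G : Set (MvPolynomial (Fin n) k)}
    (hmonic : ∀ g ∈ G, g.coeff (τ.leadExp g) = 1) :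
    Ideal.span (τ.initialTerm '' G) =
      Ideal.span ((fun s => monomial s (1 : k)) '' (τ.leadExp '' G)) := by
  rw [Set.image_image, Set.image_congr fun g hg => initialTerm_eq_monomial_one (hmonic g hg)]

lemma mem_span_initialTerm_image_iff {G : Set (MvPolynomial (Fin n) k)}
    (hmonic : ∀ g ∈ G, g.coeff (τ.leadExp g) = 1) {p : MvPolynomial (Fin n) k} :
    p ∈ Ideal.span (τ.initialTerm '' G) ↔ ∀ β ∈ p.support, ∃ g ∈ G, τ.leadExp g ≤ β := by
  rw [span_initialTerm_image_eq hmonic, mem_ideal_span_monomial_image]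
  simp only [Set.exists_mem_image]

end TermOrder

lemma MvPolynomial.monomial_one_mem_of_mem_support {σ R : Type*} [CommSemiring R]
    {S : Set (σ →₀ ℕ)} {p : MvPolynomial σ R}
    (hp : p ∈ Ideal.span ((fun s => monomial s (1 : R)) '' S)) {β : σ →₀ ℕ} (hβ : β ∈ p.support) :
    monomial β (1 : R) ∈ Ideal.span ((fun s => monomial s (1 : R)) '' S) := by
  rw [mem_ideal_span_monomial_image] at hp ⊢
  intro x hx
  rw [Finset.mem_singleton.1 (support_monomial_subset hx)]
  exact hp β hβ

lemma MvPolynomial.exists_eq_add_of_mem_support_monomial_mul {σ R : Type*} [CommSemiring R]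
    {γ β : σ →₀ ℕ} {c : R} {p : MvPolynomial σ R} (hβ : β ∈ (monomial γ c * p).support) :
    ∃ δ ∈ p.support, β = γ + δ := by
  classical
  obtain ⟨b, hb, δ, hδ, rfl⟩ := Finset.mem_add.1 (support_mul _ _ hβ)
  obtain rfl := Finset.mem_singleton.1 (support_monomial_subset hb)
  exact ⟨δ, hδ, rfl⟩

lemma wdeg_eq_weight (ω : Fin n → ℝ) (α : Fin n →₀ ℕ) : wdeg ω α = Finsupp.weight ω α := by
  rw [wdeg, Finsupp.weight_apply, Finsupp.sum_fintype _ _ (by simp)]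
  simp [mul_comm]

lemma initialForm_eq_weightedHomogeneousComponent {v : Fin n → ℝ} {f : MvPolynomial (Fin n) k}
    {β₀ : Fin n →₀ ℕ} (hβ₀ : β₀ ∈ f.support)
    (hmax : ∀ β ∈ f.support, Finsupp.weight v β ≤ Finsupp.weight v β₀) :
    initialForm v f = weightedHomogeneousComponent v (Finsupp.weight v β₀) f := by
  classical
  rw [initialForm, weightedHomogeneousComponent_apply]
  refine Finset.sum_congr (Finset.ext fun α => ?_) fun _ _ => rfl
  simp only [Finset.mem_filter, wdeg_eq_weight, and_congr_right_iff]
  exact fun hα => ⟨fun h => le_antisymm (hmax α hα) (h β₀ hβ₀), fun h β hβ => h ▸ hmax β hβ⟩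

lemma exists_initialForm_eq_weightedHomogeneousComponent (v : Fin n → ℝ)
    (f : MvPolynomial (Fin n) k) :
    ∃ D, (∀ β ∈ f.support, Finsupp.weight v β ≤ D) ∧
      initialForm v f = weightedHomogeneousComponent v D f := by
  rcases eq_or_ne f 0 with rfl | hf
  · exact ⟨0, by simp, by simp [initialForm]⟩
  · obtain ⟨β₀, hβ₀, hmax⟩ :=
      f.support.exists_max_image (Finsupp.weight v) (support_nonempty.2 hf)
    exact ⟨_, hmax, initialForm_eq_weightedHomogeneousComponent hβ₀ hmax⟩

namespace TermOrder

variable {τ : TermOrder n} {v : Fin n → ℝ}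

lemma initialForm_eq_initialTerm_of_mem_span {S : Set (Fin n →₀ ℕ)} {g : MvPolynomial (Fin n) k}
    (hg : g ≠ 0) (hmem : initialForm v g ∈ Ideal.span ((fun s => monomial s (1 : k)) '' S))
    (hred : ∀ α ∈ g.support, α ≠ τ.leadExp g →
      monomial α (1 : k) ∉ Ideal.span ((fun s => monomial s (1 : k)) '' S)) :
    initialForm v g = τ.initialTerm g := by
  classical
  obtain ⟨β₀, hβ₀, hmax⟩ := g.support.exists_max_image (Finsupp.weight v) (support_nonempty.2 hg)
  rw [initialForm_eq_weightedHomogeneousComponent hβ₀ hmax] at hmem ⊢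
  have htop : ∀ β, Finsupp.weight v β = Finsupp.weight v β₀ → β ≠ τ.leadExp g →
      g.coeff β = 0 := by
    intro β hw hne
    by_contra h0
    refine hred β (mem_support_iff.2 h0) hne (monomial_one_mem_of_mem_support hmem ?_)
    rwa [mem_support_iff, coeff_weightedHomogeneousComponent, if_pos hw]
  have hlead : Finsupp.weight v (τ.leadExp g) = Finsupp.weight v β₀ := by
    by_contra hne
    exact mem_support_iff.1 hβ₀ (htop β₀ rfl fun h => hne (h ▸ rfl))
  ext β
  rw [coeff_weightedHomogeneousComponent, initialTerm, coeff_monomial]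
  by_cases hβ : τ.leadExp g = β
  · subst hβ
    simp [hlead]
  · rw [if_neg hβ]
    split_ifs with hw
    exacts [htop β hw (Ne.symm hβ), rfl]

lemma weight_lt_of_initialForm_eq_initialTerm {g : MvPolynomial (Fin n) k} (hg : g ≠ 0)
    (h : initialForm v g = τ.initialTerm g) {δ : Fin n →₀ ℕ} (hδ : δ ∈ g.support)
    (hne : δ ≠ τ.leadExp g) : Finsupp.weight v δ < Finsupp.weight v (τ.leadExp g) := by
  classical
  obtain ⟨β₀, hβ₀, hmax⟩ := g.support.exists_max_image (Finsupp.weight v) (support_nonempty.2 hg)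
  rw [initialForm_eq_weightedHomogeneousComponent hβ₀ hmax] at h
  have hlead : Finsupp.weight v (τ.leadExp g) = Finsupp.weight v β₀ := by
    by_contra hw
    have := congrArg (coeff (τ.leadExp g)) h
    rw [coeff_weightedHomogeneousComponent, if_neg hw, initialTerm, coeff_monomial,
      if_pos rfl] at this
    exact mem_support_iff.1 (leadExp_spec hg).1 this.symm
  have hδ' : Finsupp.weight v δ ≠ Finsupp.weight v β₀ := by
    intro hw
    have := congrArg (coeff δ) h
    rw [coeff_weightedHomogeneousComponent, if_pos hw, initialTerm, coeff_monomial,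
      if_neg hne.symm] at this
    exact mem_support_iff.1 hδ this
  exact hlead ▸ (hmax δ hδ).lt_of_ne hδ'

lemma weight_lt_of_mem_support_monomial_mul {g : MvPolynomial (Fin n) k} (hg : g ≠ 0)
    (h : initialForm v g = τ.initialTerm g) {γ β : Fin n →₀ ℕ} {c : k}
    (hβ : β ∈ (monomial γ c * g).support) (hne : β ≠ γ + τ.leadExp g) :
    Finsupp.weight v β < Finsupp.weight v (γ + τ.leadExp g) := by
  obtain ⟨δ, hδ, rfl⟩ := exists_eq_add_of_mem_support_monomial_mul hβ
  simp only [map_add]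
  exact (add_lt_add_iff_left _).2
    (weight_lt_of_initialForm_eq_initialTerm hg h hδ (by rintro rfl; exact hne rfl))

lemma lt_leadExp_of_mem_support_sub {f g : MvPolynomial (Fin n) k} (hf : f ≠ 0)
    (hg : g.coeff (τ.leadExp g) = 1) (hle : τ.leadExp g ≤ τ.leadExp f) {β : Fin n →₀ ℕ}
    (hβ : β ∈ (f - monomial (τ.leadExp f - τ.leadExp g) (f.coeff (τ.leadExp f)) * g).support) :
    τ.lt β (τ.leadExp f) := by
  classical
  set γ := τ.leadExp f - τ.leadExp g
  have hg0 := ne_zero_of_coeff_leadExp_eq_one hg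
  have hα : γ + τ.leadExp g = τ.leadExp f := tsub_add_cancel_of_le hle
  have hcoeff : (monomial γ (f.coeff (τ.leadExp f)) * g).coeff (τ.leadExp f) =
      f.coeff (τ.leadExp f) := by
    rw [← hα, coeff_monomial_mul, hg, mul_one, hα]
  have hne : β ≠ τ.leadExp f := by
    rintro rfl
    rw [mem_support_iff, coeff_sub, hcoeff, sub_self] at hβ
    exact hβ rfl
  rcases Finset.mem_union.1 (support_sub _ _ _ hβ) with hβf | hβh
  · exact (leadExp_spec hf).2 β hβf hne
  · obtain ⟨δ, hδ, rfl⟩ := exists_eq_add_of_mem_support_monomial_mul hβh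
    rw [← hα]
    refine τ.lt_add_left ((leadExp_spec hg0).2 δ hδ ?_) γ
    rintro rfl
    exact hne hα

lemma weightedHomogeneousComponent_monomial_mul_mem_span {G : Set (MvPolynomial (Fin n) k)}
    (hmonic : ∀ g ∈ G, g.coeff (τ.leadExp g) = 1) {g : MvPolynomial (Fin n) k} (hgG : g ∈ G)
    (h : initialForm v g = τ.initialTerm g) (γ : Fin n →₀ ℕ) (c : k) {D : ℝ}
    (hD : Finsupp.weight v (γ + τ.leadExp g) ≤ D) :
    weightedHomogeneousComponent v D (monomial γ c * g) ∈ Ideal.span (τ.initialTerm '' G) := by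
  classical
  have hg0 := ne_zero_of_coeff_leadExp_eq_one (hmonic g hgG)
  rw [mem_span_initialTerm_image_iff hmonic]
  intro β hβ
  rw [mem_support_iff, coeff_weightedHomogeneousComponent] at hβ
  split_ifs at hβ with hw
  · obtain rfl : β = γ + τ.leadExp g := by
      by_contra hne
      exact (weight_lt_of_mem_support_monomial_mul hg0 h (mem_support_iff.2 hβ) hne).not_ge
        (hw ▸ hD)
    exact ⟨g, hgG, le_add_self⟩
  · exact absurd rfl hβ

lemma exists_leadExp_le_of_mem {I : Ideal (MvPolynomial (Fin n) k)}
    {G : Set (MvPolynomial (Fin n) k)} (hinit : τ.initialIdeal I ≤ Ideal.span (τ.initialTerm '' G))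
    (hmonic : ∀ g ∈ G, g.coeff (τ.leadExp g) = 1) {f : MvPolynomial (Fin n) k} (hf : f ∈ I)
    (hf0 : f ≠ 0) : ∃ g ∈ G, τ.leadExp g ≤ τ.leadExp f := by
  refine (mem_span_initialTerm_image_iff hmonic).1
    (hinit (Ideal.subset_span ⟨f, hf, hf0, rfl⟩)) _ ?_
  rw [initialTerm, mem_support_iff, coeff_monomial, if_pos rfl]
  exact mem_support_iff.1 (leadExp_spec hf0).1

-- Stated for every bound `D` on the weights rather than the top weight alone, since reducing `f`
-- by `G` can lower its top weight.
lemma weightedHomogeneousComponent_mem_span_initialTerm {I : Ideal (MvPolynomial (Fin n) k)}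
    {G : Set (MvPolynomial (Fin n) k)} (hGI : G ⊆ I)
    (hinit : τ.initialIdeal I ≤ Ideal.span (τ.initialTerm '' G))
    (hmonic : ∀ g ∈ G, g.coeff (τ.leadExp g) = 1)
    (hv : ∀ g ∈ G, initialForm v g = τ.initialTerm g) {f : MvPolynomial (Fin n) k} (hf : f ∈ I)
    {D : ℝ} (hD : ∀ β ∈ f.support, Finsupp.weight v β ≤ D) :
    weightedHomogeneousComponent v D f ∈ Ideal.span (τ.initialTerm '' G) := by
  classical
  induction hα : τ.leadExp f using τ.wellFounded.induction generalizing f with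
  | _ α ih =>
    subst hα
    rcases eq_or_ne f 0 with rfl | hf0
    · simp
    obtain ⟨g, hgG, hle⟩ := exists_leadExp_le_of_mem hinit hmonic hf hf0
    set γ := τ.leadExp f - τ.leadExp g
    set h := monomial γ (f.coeff (τ.leadExp f)) * g
    have hα : γ + τ.leadExp g = τ.leadExp f := tsub_add_cancel_of_le hle
    have hwα : Finsupp.weight v (τ.leadExp f) ≤ D := hD _ (leadExp_spec hf0).1
    have hwh : ∀ β ∈ h.support, Finsupp.weight v β ≤ Finsupp.weight v (τ.leadExp f) := by
      intro β hβ
      rcases eq_or_ne β (τ.leadExp f) with rfl | hne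
      · exact le_rfl
      · exact hα ▸ (weight_lt_of_mem_support_monomial_mul (ne_zero_of_coeff_leadExp_eq_one
          (hmonic g hgG)) (hv g hgG) hβ (hα.symm ▸ hne)).le
    have hsub : weightedHomogeneousComponent v D (f - h) ∈ Ideal.span (τ.initialTerm '' G) := by
      rcases eq_or_ne (f - h) 0 with h0 | h0
      · simp [h0]
      refine ih _ (lt_leadExp_of_mem_support_sub hf0 (hmonic g hgG) hle (leadExp_spec h0).1)
        (I.sub_mem hf (I.mul_mem_left _ (hGI hgG))) (fun β hβ => ?_) rfl
      rcases Finset.mem_union.1 (support_sub _ _ _ hβ) with hβf | hβh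
      exacts [hD β hβf, (hwh β hβh).trans hwα]
    have hmul := weightedHomogeneousComponent_monomial_mul_mem_span hmonic hgG (hv g hgG) γ
      (f.coeff (τ.leadExp f)) (hα.symm ▸ hwα)
    rw [← sub_add_cancel f h, map_add]
    exact add_mem hsub hmul

end TermOrder

/-- `in_v(I) = in_≺(I)` iff `in_v(g) = in_≺(g)` for every `g` in the reduced
Gröbner basis `G_≺(I)`. -/
theorem initialFormIdeal_eq_initialIdeal_iff (τ : TermOrder n)
    (I : Ideal (MvPolynomial (Fin n) k))
    (G : Set (MvPolynomial (Fin n) k)) (hG : IsReducedGroebnerBasis τ I G)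
    (v : Fin n → ℝ) :
    initialFormIdeal v I = τ.initialIdeal I ↔
      ∀ g ∈ G, initialForm v g = τ.initialTerm g := by
  obtain ⟨⟨-, hGspan, hGinit⟩, hmonic, hred, -⟩ := hG
  have hGI : G ⊆ I := hGspan ▸ Ideal.subset_span
  have hinit := hGinit.trans (τ.span_initialTerm_image_eq hmonic)
  constructor
  · intro hEq g hg
    refine TermOrder.initialForm_eq_initialTerm_of_mem_span
      (TermOrder.ne_zero_of_coeff_leadExp_eq_one (hmonic g hg)) ?_ (hinit ▸ hred g hg)
    rw [← hinit, ← hEq]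
    exact Ideal.subset_span ⟨g, hGI hg, rfl⟩
  · intro hv
    refine le_antisymm (Ideal.span_le.2 ?_) ?_
    · rintro _ ⟨f, hf, rfl⟩
      obtain ⟨D, hD, hfD⟩ := exists_initialForm_eq_weightedHomogeneousComponent v f
      rw [hfD, hGinit]
      exact TermOrder.weightedHomogeneousComponent_mem_span_initialTerm hGI hGinit.le hmonic hv
        hf hD
    · rw [hGinit, Ideal.span_le]
      rintro _ ⟨g, hg, rfl⟩
      exact Ideal.subset_span ⟨g, hGI hg, (hv g hg).symm⟩
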